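/- For each integer $k \ge 0$, the $k$-th Wick power $x^k$ of $x = :\beta\gamma^2:-:bc\gamma:+\frac32\partial\gamma$ equals $:\beta^k\gamma^{2k}: - k:bc\beta^{k-1}\gamma^{2k-1}:$ plus an element of $\mathcal D$ (the span of standard monomials containing at least one derivative). -/

import Mathlib

/-!
Write monomials in the letters `∂ⁿg` (`g ∈ {b, c, β, γ}`) and give a monomial its length and its
degree `Σ (2n + 1)`: degree ≥ length, with equality exactly when no derivative occurs. Because all
operator products among the generators are scalars with at most simple poles, a mode `a₍ₘ₎` of a
monomial `a` shifts degrees by a fixed amount and raises lengths by at most the length of `a`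
(one less if `m ≥ 0`). In the normal ordered product formula for `:(:au:)v:` the term `:a(:uv:):`
cancels and all other terms lose a letter, so the quasi-associativity defect `:(:ab:)c: - :abc:`
has degree exceeding its length and lies in `𝒟` once its monomials are reordered (a repeated odd
letter gives `0`). Hence `:x ·:` acts modulo `𝒟` by prepending `βγγ - bcγ`; prepending `bcγ` to a
monomial containing `b` gives `0`, and the formula follows by induction on `k`.
-/

open scoped BigOperators

/-- Generalized binomial coefficient `m choose j` for an integer `m`, as a complex number. -/
noncomputable def zchoose (m : ℤ) (j : ℕ) : ℂ :=
  (∏ i ∈ Finset.range j, ((m : ℂ) - (i : ℂ))) / (Nat.factorial j : ℂ)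

/-- A vertex superalgebra presented via its circle products `∘ₙ`, in the sense of
Lian-Zuckerman (a commutative quantum operator algebra).  The parity grading is recorded by
the submodules `even`, `odd`; `comm_even`/`comm_odd` encode the Borcherds commutator formula
for the Fourier modes acting on the left regular module, and `iterate_even`/`iterate_odd`
encode the iterate (associativity) formula. -/
structure VA (V : Type) [AddCommGroup V] [Module ℂ V] where
  circ : ℤ → V →ₗ[ℂ] V →ₗ[ℂ] V
  one : V
  even : Submodule ℂ V
  odd : Submodule ℂ V
  one_even : one ∈ even
  circ_ee : ∀ (n : ℤ) {a b : V}, a ∈ even → b ∈ even → circ n a b ∈ even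
  circ_oo : ∀ (n : ℤ) {a b : V}, a ∈ odd → b ∈ odd → circ n a b ∈ even
  circ_eo : ∀ (n : ℤ) {a b : V}, a ∈ even → b ∈ odd → circ n a b ∈ odd
  circ_oe : ∀ (n : ℤ) {a b : V}, a ∈ odd → b ∈ even → circ n a b ∈ odd
  unit_left : ∀ (n : ℤ) (a : V), circ n one a = if n = -1 then a else 0
  unit_right_wick : ∀ a : V, circ (-1) a one = a
  unit_right_nonneg : ∀ (n : ℤ) (a : V), 0 ≤ n → circ n a one = 0
  truncate : ∀ a b : V, ∃ N : ℕ, ∀ n : ℤ, (N : ℤ) ≤ n → circ n a b = 0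
  comm_even : ∀ {a b : V}, (a ∈ even ∨ b ∈ even) → ∀ (m n : ℤ) (c : V),
    circ m a (circ n b c) - circ n b (circ m a c)
      = ∑ᶠ j : ℕ, zchoose m j • circ (m + n - (j : ℤ)) (circ (j : ℤ) a b) c
  comm_odd : ∀ {a b : V}, a ∈ odd → b ∈ odd → ∀ (m n : ℤ) (c : V),
    circ m a (circ n b c) + circ n b (circ m a c)
      = ∑ᶠ j : ℕ, zchoose m j • circ (m + n - (j : ℤ)) (circ (j : ℤ) a b) c
  iterate_even : ∀ {a b : V}, (a ∈ even ∨ b ∈ even) → ∀ (m n : ℤ) (c : V),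
    circ m (circ n a b) c
      = ∑ᶠ j : ℕ, ((-1 : ℂ) ^ j * zchoose n j) •
          (circ (n - (j : ℤ)) a (circ (m + (j : ℤ)) b c)
            - ((-1 : ℂ) ^ n) • circ (n + m - (j : ℤ)) b (circ (j : ℤ) a c))
  iterate_odd : ∀ {a b : V}, a ∈ odd → b ∈ odd → ∀ (m n : ℤ) (c : V),
    circ m (circ n a b) c
      = ∑ᶠ j : ℕ, ((-1 : ℂ) ^ j * zchoose n j) •
          (circ (n - (j : ℤ)) a (circ (m + (j : ℤ)) b c)
            + ((-1 : ℂ) ^ n) • circ (n + m - (j : ℤ)) b (circ (j : ℤ) a c))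

namespace VA

variable {V : Type} [AddCommGroup V] [Module ℂ V] (A : VA V)

/-- The formal derivative `∂a = a ∘₋₂ 1`. -/
def D (a : V) : V := A.circ (-2) a A.one

/-- The Wick (normally ordered) product `:ab: = a ∘₋₁ b`. -/
def wick (a b : V) : V := A.circ (-1) a b

end VA

namespace VA

/-- Iterated (right-normalized) Wick product of a list of elements. -/
def wlist {V : Type} [AddCommGroup V] [Module ℂ V] (A : VA V) : List V → V
  | [] => A.one
  | a :: l => A.wick a (wlist A l)

/-- Iterated Wick power. -/
def wpow {V : Type} [AddCommGroup V] [Module ℂ V] (A : VA V) (a : V) : ℕ → V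
  | 0 => A.one
  | k + 1 => A.wick a (wpow A a k)

end VA

namespace VA

variable {V : Type} [AddCommGroup V] [Module ℂ V]

/-- The standard monomial `:∂^{n₁}b ⋯ ∂^{nᵢ}b ∂^{m₁}c ⋯ ∂^{mⱼ}c ∂^{s₁}β ⋯ ∂^{sₖ}β ∂^{t₁}γ ⋯ ∂^{tₗ}γ:`. -/
def stdMon (A : VA V) (b c β γ : V) (ns ms ss ts : List ℕ) : V :=
  wlist A ((ns.map fun k => A.D^[k] b) ++ (ms.map fun k => A.D^[k] c)
    ++ (ss.map fun k => A.D^[k] β) ++ (ts.map fun k => A.D^[k] γ))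

/-- The set of all standard monomials. -/
def StdSet (A : VA V) (b c β γ : V) : Set V :=
  {v | ∃ ns ms ss ts : List ℕ,
    List.Chain' (· > ·) ns ∧ List.Chain' (· > ·) ms ∧
    List.Chain' (· ≥ ·) ss ∧ List.Chain' (· ≥ ·) ts ∧
    v = stdMon A b c β γ ns ms ss ts}

/-- The set of standard monomials containing at least one derivative. -/
def DSet (A : VA V) (b c β γ : V) : Set V :=
  {v | ∃ ns ms ss ts : List ℕ,
    List.Chain' (· > ·) ns ∧ List.Chain' (· > ·) ms ∧
    List.Chain' (· ≥ ·) ss ∧ List.Chain' (· ≥ ·) ts ∧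
    (∃ k ∈ ns ++ ms ++ ss ++ ts, 0 < k) ∧
    v = stdMon A b c β γ ns ms ss ts}

end VA

lemma zchoose_natCast (n j : ℕ) : zchoose n j = n.choose j := by
  have h := descPochhammer_eval_eq_descFactorial ℂ n j
  rw [descPochhammer_eval_eq_prod_range, Nat.descFactorial_eq_factorial_mul_choose] at h
  rw [zchoose, Int.cast_natCast, h, Nat.cast_mul,
    mul_div_cancel_left₀ _ (Nat.cast_ne_zero.mpr j.factorial_ne_zero)]

lemma prod_range_neg_sub {R : Type*} [CommRing R] (c : R) (j : ℕ) :
    ∏ i ∈ Finset.range j, (-c - i) = (-1) ^ j * ∏ i ∈ Finset.range j, (c + i) := by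
  rw [← Finset.card_range j, ← Finset.prod_const, Finset.card_range,
    ← Finset.prod_mul_distrib]
  exact Finset.prod_congr rfl fun i _ => by ring

lemma zchoose_neg_one (j : ℕ) : zchoose (-1) j = (-1) ^ j := by
  have h : ∏ i ∈ Finset.range j, (1 + i : ℂ) = j.factorial := by
    rw [← Finset.prod_range_add_one_eq_factorial]; push_cast; simp only [add_comm]
  rw [zchoose, Int.cast_neg, Int.cast_one, prod_range_neg_sub, h,
    mul_div_cancel_right₀ _ (Nat.cast_ne_zero.mpr j.factorial_ne_zero)]

lemma zchoose_neg_two (j : ℕ) : zchoose (-2) j = (-1) ^ j * (j + 1) := by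
  have h : ∏ i ∈ Finset.range j, (2 + i : ℂ) = (j + 1).factorial := by
    rw [← Finset.prod_range_add_one_eq_factorial, Nat.cast_prod, Finset.prod_range_succ']
    push_cast
    rw [mul_one]
    exact Finset.prod_congr rfl fun i _ => by ring
  rw [zchoose, Int.cast_neg, Int.cast_ofNat, prod_range_neg_sub, h, Nat.factorial_succ,
    Nat.cast_mul, mul_div_assoc,
    mul_div_cancel_right₀ _ (Nat.cast_ne_zero.mpr j.factorial_ne_zero)]
  push_cast; ring

namespace VA

variable {V : Type} [AddCommGroup V] [Module ℂ V]

def IsHomogeneous (A : VA V) (a : V) : Prop := a ∈ A.even ∨ a ∈ A.odd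

def KoszulSign (A : VA V) (a b : V) (ε : ℂ) : Prop :=
  (ε = 1 ∧ (a ∈ A.even ∨ b ∈ A.even)) ∨ (ε = -1 ∧ a ∈ A.odd ∧ b ∈ A.odd)

variable {A : VA V}

lemma IsHomogeneous.circ {a b : V} (ha : A.IsHomogeneous a) (hb : A.IsHomogeneous b) (n : ℤ) :
    A.IsHomogeneous (A.circ n a b) := by
  rcases ha with ha | ha <;> rcases hb with hb | hb
  exacts [Or.inl (A.circ_ee n ha hb), Or.inr (A.circ_eo n ha hb), Or.inr (A.circ_oe n ha hb),
    Or.inl (A.circ_oo n ha hb)]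

lemma isHomogeneous_one : A.IsHomogeneous A.one := Or.inl A.one_even

lemma IsHomogeneous.D {a : V} (ha : A.IsHomogeneous a) : A.IsHomogeneous (A.D a) :=
  ha.circ isHomogeneous_one _

lemma IsHomogeneous.exists_koszulSign {a b : V} (ha : A.IsHomogeneous a)
    (hb : A.IsHomogeneous b) : ∃ ε, A.KoszulSign a b ε := by
  by_cases h : a ∈ A.even ∨ b ∈ A.even
  · exact ⟨1, Or.inl ⟨rfl, h⟩⟩
  · rw [not_or] at h
    exact ⟨-1, Or.inr ⟨rfl, ha.resolve_left h.1, hb.resolve_left h.2⟩⟩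

lemma KoszulSign.comm {a b : V} {ε : ℂ} (h : A.KoszulSign a b ε) (m n : ℤ) (v : V) :
    A.circ m a (A.circ n b v) = ε • A.circ n b (A.circ m a v)
      + ∑ᶠ j : ℕ, zchoose m j • A.circ (m + n - j) (A.circ j a b) v := by
  rcases h with ⟨rfl, hp⟩ | ⟨rfl, ha, hb⟩
  · rw [one_smul, ← A.comm_even hp, add_sub_cancel]
  · rw [← A.comm_odd ha hb, neg_one_smul]; abel

lemma KoszulSign.iterate {a b : V} {ε : ℂ} (h : A.KoszulSign a b ε) (m n : ℤ) (v : V) :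
    A.circ m (A.circ n a b) v = ∑ᶠ j : ℕ, ((-1 : ℂ) ^ j * zchoose n j) •
      (A.circ (n - j) a (A.circ (m + j) b v)
        - (ε * (-1 : ℂ) ^ n) • A.circ (n + m - j) b (A.circ j a v)) := by
  rcases h with ⟨rfl, hp⟩ | ⟨rfl, ha, hb⟩
  · simp only [A.iterate_even hp, one_mul]
  · simp only [A.iterate_odd ha hb, neg_one_mul, neg_smul, sub_neg_eq_add]

lemma circ_D (m : ℤ) (a v : V) : A.circ m (A.D a) v = (-m : ℂ) • A.circ (m - 1) a v := by
  have hs : A.KoszulSign a A.one 1 := Or.inl ⟨rfl, Or.inr A.one_even⟩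
  have hc : ∀ j : ℕ, (-1 : ℂ) ^ j * zchoose (-2) j = j + 1 := fun j => by
    rw [zchoose_neg_two, ← mul_assoc, ← mul_pow]; norm_num
  rw [D, hs.iterate]
  simp only [hc, A.unit_left, one_mul, apply_ite, map_zero]
  rcases lt_trichotomy m 0 with hm | rfl | hm
  · obtain ⟨q, rfl⟩ : ∃ q : ℕ, m = -1 - q := ⟨(-1 - m).toNat, by omega⟩
    rw [finsum_eq_single _ q fun j hj => by
      simp [show (-1 - q + j : ℤ) ≠ -1 by omega,
        show (-2 + (-1 - q) - j : ℤ) ≠ -1 by omega]]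
    simp [show (-2 + (-1 - q) - q : ℤ) ≠ -1 by omega, show (-2 - q : ℤ) = -1 - q - 1 by ring]
  · simp [show ∀ j : ℕ, (j : ℤ) ≠ -1 by omega,
      show ∀ j : ℕ, (-2 - j : ℤ) ≠ -1 by omega]
  · obtain ⟨p, rfl⟩ : ∃ p : ℕ, m = p + 1 := ⟨(m - 1).toNat, by omega⟩
    rw [finsum_eq_single _ p fun j hj => by
      simp [show (p + 1 + j : ℤ) ≠ -1 by omega, show (-2 + (p + 1) - j : ℤ) ≠ -1 by omega]]
    simp [show (p + 1 + p : ℤ) ≠ -1 by omega, show (-2 + (p + 1) - p : ℤ) = -1 by ring]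
    rw [← neg_smul, neg_add, add_comm]

lemma circ_D_iterate (j : ℕ) (m : ℤ) (a v : V) :
    A.circ m (A.D^[j] a) v
      = (∏ i ∈ Finset.range j, ((i : ℂ) - m)) • A.circ (m - j) a v := by
  induction j generalizing m with
  | zero => simp
  | succ n ih =>
    rw [Function.iterate_succ_apply', circ_D, ih, smul_smul, Finset.prod_range_succ']
    push_cast
    congr 1
    · rw [mul_comm]; simp only [zero_sub]; congr 1
      exact Finset.prod_congr rfl fun i _ => by ring
    · ring_nf

lemma circ_neg_one_sub (j : ℕ) (a v : V) :
    A.circ (-1 - j) a v = (j.factorial : ℂ)⁻¹ • A.circ (-1) (A.D^[j] a) v := by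
  have h : ∏ i ∈ Finset.range j, ((i : ℂ) - (-1 : ℤ)) = j.factorial := by
    rw [← Finset.prod_range_add_one_eq_factorial]; push_cast; simp only [sub_neg_eq_add]
  rw [circ_D_iterate, h, smul_smul, inv_mul_cancel₀ (Nat.cast_ne_zero.mpr j.factorial_ne_zero),
    one_smul]

lemma D_smul_one (μ : ℂ) : A.D (μ • A.one) = 0 := by
  rw [D, map_smul, LinearMap.smul_apply, A.unit_left, if_neg (by norm_num), smul_zero]

lemma KoszulSign.circ_D {a u : V} {ε : ℂ} (h : A.KoszulSign a u ε) (m : ℕ) :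
    A.circ m a (A.D u) = (m : ℂ) • A.circ (m - 1) a u + A.D (A.circ m a u) := by
  have hsum := h.comm m (-2) A.one
  rw [A.unit_right_nonneg _ _ (Nat.cast_nonneg m), map_zero, smul_zero, zero_add] at hsum
  have hsupp : (Function.support fun j : ℕ =>
      zchoose m j • A.circ (m + -2 - j) (A.circ j a u) A.one) ⊆ ↑(Finset.range (m + 1)) := by
    intro j hj
    by_contra hjm
    simp only [Finset.coe_range, Set.mem_Iio, not_lt] at hjm
    exact hj (by
      dsimp only
      rw [zchoose_natCast, Nat.choose_eq_zero_of_lt (by omega), Nat.cast_zero, zero_smul])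
  rw [D, hsum, finsum_eq_finsetSum_of_support_subset _ hsupp]
  rcases m with _ | p
  · simp [D, zchoose]
  · rw [Finset.sum_range_succ, Finset.sum_range_succ, Finset.sum_eq_zero fun j hj => by
      rw [A.unit_right_nonneg _ _ (by simp at hj; omega), smul_zero]]
    simp only [zchoose_natCast, Nat.choose_self, Nat.choose_succ_self_right]
    push_cast
    rw [show (p + 1 + -2 - p : ℤ) = -1 by ring, show (p + 1 + -2 - (p + 1) : ℤ) = -2 by ring,
      A.unit_right_wick, show (p + 1 - 1 : ℤ) = p by ring, zero_add, one_smul]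
    rfl

lemma circ_smul_one (n : ℤ) (μ : ℂ) (v : V) :
    A.circ n (μ • A.one) v = if n = -1 then μ • v else 0 := by
  rw [map_smul, LinearMap.smul_apply, A.unit_left, smul_ite, smul_zero]

lemma KoszulSign.circ_circ_neg_one {a b : V} {ε : ℂ} (h : A.KoszulSign a b ε) {μ : ℕ → ℂ}
    (hμ : ∀ j : ℕ, A.circ j a b = μ j • A.one) (m : ℕ) (v : V) :
    A.circ m a (A.circ (-1) b v) = ε • A.circ (-1) b (A.circ m a v) + μ m • v := by
  rw [h.comm, finsum_eq_single _ m fun j hj => by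
    rw [hμ, circ_smul_one, if_neg (by omega), smul_zero]]
  rw [hμ, circ_smul_one, if_pos (by ring), zchoose_natCast, Nat.choose_self, Nat.cast_one,
    one_smul]

lemma KoszulSign.wick_comm {a b : V} {ε : ℂ} (h : A.KoszulSign a b ε)
    (hab : ∀ j : ℕ, ∃ μ : ℂ, A.circ j a b = μ • A.one) (v : V) :
    A.circ (-1) a (A.circ (-1) b v) = ε • A.circ (-1) b (A.circ (-1) a v) := by
  choose μ hμ using hab
  rw [h.comm, finsum_eq_zero_of_forall_eq_zero fun j => by
    rw [hμ, circ_smul_one, if_neg (by omega), smul_zero], add_zero]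

lemma KoszulSign.circ_wick {a u : V} {ε : ℂ} (h : A.KoszulSign a u ε) (m : ℤ) (v : V) :
    ∃ N : ℕ, A.circ m (A.wick a u) v = ∑ j ∈ Finset.range (N + 1),
      (A.circ (-1 - j) a (A.circ (m + j) u v) + ε • A.circ (m - 1 - j) u (A.circ j a v)) := by
  obtain ⟨N₁, hN₁⟩ := A.truncate u v
  obtain ⟨N₂, hN₂⟩ := A.truncate a v
  refine ⟨N₁ + N₂ + m.natAbs, ?_⟩
  have hc : ∀ j : ℕ, (-1 : ℂ) ^ j * zchoose (-1) j = 1 := fun j => by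
    rw [zchoose_neg_one, ← mul_pow]; norm_num
  rw [wick, h.iterate]
  simp only [hc, one_smul, zpow_neg_one, inv_neg, inv_one, mul_neg_one, neg_smul, sub_neg_eq_add,
    show ∀ j : ℤ, -1 + m - j = m - 1 - j from fun j => by ring]
  refine finsum_eq_finsetSum_of_support_subset _ fun j hj => ?_
  by_contra hjN
  simp only [Finset.coe_range, Set.mem_Iio, not_lt] at hjN
  exact hj (by
    dsimp only
    rw [hN₁ _ (by omega), hN₂ _ (by omega), map_zero, map_zero, smul_zero, add_zero])

section Monomials

variable {ι : Type*}

structure IsScalarOPE (A : VA V) (g : ι → V) : Prop where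
  isHomogeneous : ∀ i, A.IsHomogeneous (g i)
  circ_zero : ∀ i j, A.circ 0 (g i) (g j) ∈ ℂ ∙ A.one
  circ_pos : ∀ i j (n : ℕ), 0 < n → A.circ n (g i) (g j) = 0

def letter (A : VA V) (g : ι → V) (L : ι × ℕ) : V := A.D^[L.2] (g L.1)

def mon (A : VA V) (g : ι → V) (ls : List (ι × ℕ)) : V := A.wlist (ls.map (A.letter g))

variable {g : ι → V}

lemma mon_nil : A.mon g [] = A.one := rfl

lemma mon_cons (L : ι × ℕ) (ls : List (ι × ℕ)) :
    A.mon g (L :: ls) = A.circ (-1) (A.letter g L) (A.mon g ls) := rfl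

lemma mon_singleton (L : ι × ℕ) : A.mon g [L] = A.letter g L := A.unit_right_wick _

lemma D_iterate_letter (i : ι) (n j : ℕ) :
    A.D^[j] (A.letter g (i, n)) = A.letter g (i, n + j) := by
  rw [letter, letter, ← Function.iterate_add_apply, add_comm]

namespace IsScalarOPE

lemma isHomogeneous_letter (hg : A.IsScalarOPE g) (L : ι × ℕ) :
    A.IsHomogeneous (A.letter g L) := by
  rw [letter]
  induction L.2 with
  | zero => exact hg.isHomogeneous L.1
  | succ n ih => rw [Function.iterate_succ_apply']; exact ih.D

lemma isHomogeneous_mon (hg : A.IsScalarOPE g) (ls : List (ι × ℕ)) :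
    A.IsHomogeneous (A.mon g ls) := by
  induction ls with
  | nil => exact isHomogeneous_one
  | cons L ls ih => exact (hg.isHomogeneous_letter L).circ ih _

lemma circ_gen_letter (hg : A.IsScalarOPE g) (i : ι) (L : ι × ℕ) (k : ℕ) :
    ∃ μ : ℂ, A.circ k (g i) (A.letter g L) = μ • A.one ∧ (μ ≠ 0 → k = L.2) := by
  obtain ⟨j, n⟩ := L
  induction n generalizing k with
  | zero =>
    rcases Nat.eq_zero_or_pos k with rfl | hk
    · obtain ⟨μ, hμ⟩ := Submodule.mem_span_singleton.mp (hg.circ_zero i j)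
      exact ⟨μ, hμ.symm, fun _ => rfl⟩
    · exact ⟨0, by rw [zero_smul]; exact hg.circ_pos i j k hk, fun h => absurd rfl h⟩
  | succ n ih =>
    obtain ⟨ε, hε⟩ := (hg.isHomogeneous i).exists_koszulSign (hg.isHomogeneous_letter (j, n))
    have hD : A.letter g (j, n + 1) = A.D (A.letter g (j, n)) := Function.iterate_succ_apply' ..
    obtain ⟨μ, hμ, -⟩ := ih k
    rw [hD, hε.circ_D, hμ, D_smul_one, add_zero]
    rcases k with _ | k
    · exact ⟨0, by rw [Nat.cast_zero, zero_smul, zero_smul], fun h => absurd rfl h⟩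
    · obtain ⟨μ', hμ', hdeg⟩ := ih k
      refine ⟨(k + 1 : ℂ) * μ', ?_, fun h => ?_⟩
      · rw [Nat.cast_add_one, Nat.cast_add_one, add_sub_cancel_right, hμ', smul_smul]
      · have := hdeg (right_ne_zero_of_mul h); omega

lemma circ_letter_letter (hg : A.IsScalarOPE g) (L L' : ι × ℕ) (m : ℕ) :
    ∃ μ : ℂ, A.circ m (A.letter g L) (A.letter g L') = μ • A.one ∧
      (μ ≠ 0 → m = L.2 + L'.2) := by
  obtain ⟨i, n⟩ := L
  rw [letter, circ_D_iterate]
  by_cases hmn : m < n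
  · refine ⟨0, ?_, fun h => absurd rfl h⟩
    rw [Finset.prod_eq_zero (Finset.mem_range.mpr hmn) (by push_cast; ring), zero_smul, zero_smul]
  · obtain ⟨μ, hμ, hdeg⟩ := hg.circ_gen_letter i L' (m - n)
    refine ⟨(∏ r ∈ Finset.range n, ((r : ℂ) - m)) * μ, ?_, fun h => ?_⟩
    · rw [show (m : ℤ) - n = (m - n : ℕ) by omega, hμ, smul_smul, Int.cast_natCast]
    · have := hdeg (right_ne_zero_of_mul h); omega

end IsScalarOPE

/-- Twice the weight of a monomial when every generator has weight `1/2`. -/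
def deg (ls : List (ι × ℕ)) : ℤ := ls.length + 2 * (ls.map Prod.snd).sum

def monSpan (A : VA V) (g : ι → V) (w ℓ : ℤ) : Submodule ℂ V :=
  Submodule.span ℂ {v | ∃ ls, deg ls = w ∧ (ls.length : ℤ) ≤ ℓ ∧ v = A.mon g ls}

def ModeBound (A : VA V) (g : ι → V) (a : V) (p q : ℤ) : Prop :=
  ∀ (m w ℓ : ℤ) (v : V), v ∈ A.monSpan g w ℓ →
    A.circ m a v ∈ A.monSpan g (w + p - 2 * (m + 1)) (ℓ + q - if 0 ≤ m then 1 else 0)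

lemma deg_cons (L : ι × ℕ) (ls : List (ι × ℕ)) :
    deg (L :: ls) = deg ls + (2 * L.2 + 1) := by
  simp only [deg, List.length_cons, List.map_cons, List.sum_cons]; push_cast; ring

lemma deg_append (ls ls' : List (ι × ℕ)) : deg (ls ++ ls') = deg ls + deg ls' := by
  simp only [deg, List.length_append, List.map_append, List.sum_append]; push_cast; ring

lemma mon_mem_monSpan {ls : List (ι × ℕ)} {w ℓ : ℤ} (hw : deg ls = w)
    (hℓ : ls.length ≤ ℓ) :
    A.mon g ls ∈ A.monSpan g w ℓ :=
  Submodule.subset_span ⟨ls, hw, hℓ, rfl⟩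

lemma monSpan_mono {w ℓ ℓ' : ℤ} (h : ℓ ≤ ℓ') :
    A.monSpan g w ℓ ≤ A.monSpan g w ℓ' :=
  Submodule.span_mono fun _ ⟨ls, hw, hℓ, hv⟩ => ⟨ls, hw, hℓ.trans h, hv⟩

lemma mem_monSpan_of_eq {w w' ℓ ℓ' : ℤ} {v : V} (hv : v ∈ A.monSpan g w ℓ) (hw : w = w')
    (hℓ : ℓ ≤ ℓ') : v ∈ A.monSpan g w' ℓ' :=
  hw ▸ monSpan_mono hℓ hv

lemma apply_mem_of_mem_monSpan {w ℓ : ℤ} {f : V →ₗ[ℂ] V} {P : Submodule ℂ V}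
    (h : ∀ ls : List (ι × ℕ), deg ls = w → ls.length ≤ ℓ → f (A.mon g ls) ∈ P)
    {v : V} (hv : v ∈ A.monSpan g w ℓ) : f v ∈ P :=
  (Submodule.span_le (p := P.comap f)).mpr
    (by rintro _ ⟨ls, hw, hℓ, rfl⟩; exact h ls hw hℓ) hv

lemma modeBound_one : A.ModeBound g A.one 0 0 := by
  intro m w ℓ v hv
  rcases eq_or_ne m (-1) with rfl | hm
  · rw [A.unit_left, if_pos rfl]; exact mem_monSpan_of_eq hv (by ring) (by norm_num)
  · rw [A.unit_left, if_neg hm]; exact zero_mem _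

lemma wick_letter_mem (L : ι × ℕ) {w ℓ : ℤ} {v : V} (hv : v ∈ A.monSpan g w ℓ) :
    A.circ (-1) (A.letter g L) v ∈ A.monSpan g (w + (2 * L.2 + 1)) (ℓ + 1) :=
  apply_mem_of_mem_monSpan (fun ls hw hℓ => by
    rw [← mon_cons]; exact mon_mem_monSpan (by rw [deg_cons, hw]) (by simp; omega)) hv

namespace IsScalarOPE

lemma circ_natCast_letter_mon_mem (hg : A.IsScalarOPE g) (L : ι × ℕ) (m : ℕ)
    (ls : List (ι × ℕ)) :
    A.circ m (A.letter g L) (A.mon g ls) ∈ A.monSpan g (deg ls + (2 * L.2 + 1) - 2 * (m + 1))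
      ls.length := by
  induction ls with
  | nil => rw [mon_nil, A.unit_right_nonneg _ _ (Nat.cast_nonneg m)]; exact zero_mem _
  | cons L' ls ih =>
    obtain ⟨ε, hε⟩ :=
      (hg.isHomogeneous_letter L).exists_koszulSign (hg.isHomogeneous_letter L')
    choose μ hμ hdeg using hg.circ_letter_letter L L'
    rw [mon_cons, hε.circ_circ_neg_one (fun j => hμ j), List.length_cons]
    refine add_mem (Submodule.smul_mem _ _ ?_) ?_
    · exact mem_monSpan_of_eq (wick_letter_mem L' ih) (by rw [deg_cons]; ring) le_rfl
    · by_cases hμm : μ m = 0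
      · rw [hμm, zero_smul]; exact zero_mem _
      · refine Submodule.smul_mem _ _ (mon_mem_monSpan ?_ (by omega))
        rw [deg_cons, hdeg m hμm]; push_cast; ring

lemma modeBound_letter (hg : A.IsScalarOPE g) (L : ι × ℕ) :
    A.ModeBound g (A.letter g L) (2 * L.2 + 1) 1 := by
  intro m w ℓ v hv
  rcases le_or_gt 0 m with hm | hm
  · obtain ⟨k, rfl⟩ := Int.eq_ofNat_of_zero_le hm
    rw [if_pos hm]
    exact apply_mem_of_mem_monSpan (fun ls hw hℓ => mem_monSpan_of_eq
      (hg.circ_natCast_letter_mon_mem L k ls) (by rw [hw]) (by omega)) hv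
  · obtain ⟨j, rfl⟩ : ∃ j : ℕ, m = -1 - j := ⟨(-1 - m).toNat, by omega⟩
    rw [if_neg (by omega), circ_neg_one_sub, D_iterate_letter]
    exact Submodule.smul_mem _ _
      (mem_monSpan_of_eq (wick_letter_mem _ hv) (by push_cast; ring) (by omega))

end IsScalarOPE

namespace ModeBound

variable {a u : V} {p p' q q' : ℤ} {ε : ℂ}

lemma wick (ha : A.ModeBound g a p q) (hu : A.ModeBound g u p' q') (hε : A.KoszulSign a u ε) :
    A.ModeBound g (A.wick a u) (p + p') (q + q') := by
  intro m w ℓ v hv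
  obtain ⟨N, hN⟩ := hε.circ_wick m v
  rw [hN]
  refine Submodule.sum_mem _ fun j _ => add_mem ?_ (Submodule.smul_mem _ _ ?_)
  · exact mem_monSpan_of_eq (ha _ _ _ _ (hu _ _ _ _ hv)) (by ring) (by split_ifs <;> omega)
  · exact mem_monSpan_of_eq (hu _ _ _ _ (ha _ _ _ _ hv)) (by ring) (by split_ifs <;> omega)

lemma wick_assoc_sub_mem (ha : A.ModeBound g a p q) (hu : A.ModeBound g u p' q')
    (hε : A.KoszulSign a u ε) {w ℓ : ℤ} {v : V} (hv : v ∈ A.monSpan g w ℓ) :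
    A.circ (-1) (A.wick a u) v - A.circ (-1) a (A.circ (-1) u v)
      ∈ A.monSpan g (w + p + p') (ℓ + q + q' - 1) := by
  obtain ⟨N, hN⟩ := hε.circ_wick (-1) v
  have hcancel : ∀ x y z : V, x + (y + z) - y = x + z := fun x y z => by abel
  -- the `j = 0` term `a₍₋₁₎u₍₋₁₎v` cancels; each other term contains a nonnegative mode
  rw [hN, Finset.sum_range_succ', Nat.cast_zero, sub_zero, add_zero, hcancel]
  refine add_mem (Submodule.sum_mem _ fun j _ => add_mem ?_ (Submodule.smul_mem _ _ ?_))
    (Submodule.smul_mem _ _ ?_)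
  · exact mem_monSpan_of_eq (ha _ _ _ _ (hu _ _ _ _ hv)) (by ring)
      (by push_cast; split_ifs <;> omega)
  · exact mem_monSpan_of_eq (hu _ _ _ _ (ha _ _ _ _ hv)) (by ring)
      (by push_cast; split_ifs <;> omega)
  · exact mem_monSpan_of_eq (hu _ _ _ _ (ha _ _ _ _ hv)) (by ring) (by split_ifs <;> omega)

end ModeBound

namespace IsScalarOPE

lemma modeBound_mon (hg : A.IsScalarOPE g) (ls : List (ι × ℕ)) :
    A.ModeBound g (A.mon g ls) (deg ls) ls.length := by
  induction ls with
  | nil => exact modeBound_one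
  | cons L ls ih =>
    obtain ⟨ε, hε⟩ := (hg.isHomogeneous_letter L).exists_koszulSign (hg.isHomogeneous_mon ls)
    have h := (hg.modeBound_letter L).wick ih hε
    rw [add_comm, add_comm (1 : ℤ), ← Nat.cast_succ, ← deg_cons] at h
    exact h

lemma wick_mon_sub_mon_append_mem (hg : A.IsScalarOPE g) (ls ls' : List (ι × ℕ)) :
    A.circ (-1) (A.mon g ls) (A.mon g ls') - A.mon g (ls ++ ls')
      ∈ A.monSpan g (deg (ls ++ ls')) (ls.length + ls'.length - 1) := by
  induction ls with
  | nil => rw [mon_nil, A.unit_left, if_pos rfl, List.nil_append, sub_self]; exact zero_mem _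
  | cons L ls ih =>
    obtain ⟨ε, hε⟩ := (hg.isHomogeneous_letter L).exists_koszulSign (hg.isHomogeneous_mon ls)
    have hv : A.mon g ls' ∈ A.monSpan g (deg ls') ls'.length := mon_mem_monSpan rfl le_rfl
    have hassoc := (hg.modeBound_letter L).wick_assoc_sub_mem (hg.modeBound_mon ls) hε hv
    have hrest := wick_letter_mem L ih
    rw [map_sub] at hrest
    rw [mon_cons, List.cons_append, mon_cons, ← sub_add_sub_cancel _
      (A.circ (-1) (A.letter g L) (A.circ (-1) (A.mon g ls) (A.mon g ls')))]
    refine add_mem (mem_monSpan_of_eq hassoc ?_ ?_) (mem_monSpan_of_eq hrest ?_ ?_)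
    · rw [deg_cons, deg_append]; ring
    · simp only [List.length_cons]; push_cast; omega
    · rw [deg_cons]
    · simp only [List.length_cons]; push_cast; omega

end IsScalarOPE

lemma letter_mem_even {L : ι × ℕ} (h : g L.1 ∈ A.even) : A.letter g L ∈ A.even := by
  rw [letter]
  induction L.2 with
  | zero => exact h
  | succ n ih => rw [Function.iterate_succ_apply']; exact A.circ_ee _ ih A.one_even

lemma letter_mem_odd {L : ι × ℕ} (h : g L.1 ∈ A.odd) : A.letter g L ∈ A.odd := by
  rw [letter]
  induction L.2 with
  | zero => exact h
  | succ n ih => rw [Function.iterate_succ_apply']; exact A.circ_oe _ ih A.one_even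

namespace IsScalarOPE

lemma wick_letter_comm (hg : A.IsScalarOPE g) {L L' : ι × ℕ} {ε : ℂ}
    (hε : A.KoszulSign (A.letter g L) (A.letter g L') ε) (v : V) :
    A.circ (-1) (A.letter g L) (A.circ (-1) (A.letter g L') v)
      = ε • A.circ (-1) (A.letter g L') (A.circ (-1) (A.letter g L) v) :=
  hε.wick_comm (fun j => (hg.circ_letter_letter L L' j).imp fun _ => And.left) v

lemma mon_perm (hg : A.IsScalarOPE g) {ls ls' : List (ι × ℕ)} (h : ls.Perm ls') :
    ∃ μ : ℂ, A.mon g ls = μ • A.mon g ls' := by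
  induction h with
  | nil => exact ⟨1, (one_smul _ _).symm⟩
  | cons L _ ih =>
    obtain ⟨μ, hμ⟩ := ih
    exact ⟨μ, by rw [mon_cons, mon_cons, hμ, map_smul]⟩
  | swap L L' ls =>
    obtain ⟨ε, hε⟩ :=
      (hg.isHomogeneous_letter L').exists_koszulSign (hg.isHomogeneous_letter L)
    exact ⟨ε, hg.wick_letter_comm hε _⟩
  | trans _ _ ih₁ ih₂ =>
    obtain ⟨μ₁, hμ₁⟩ := ih₁
    obtain ⟨μ₂, hμ₂⟩ := ih₂
    exact ⟨μ₁ * μ₂, by rw [hμ₁, hμ₂, smul_smul]⟩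

lemma mon_cons_append_of_even (hg : A.IsScalarOPE g) {L : ι × ℕ} (hL : g L.1 ∈ A.even)
    (ls ls' : List (ι × ℕ)) : A.mon g (L :: (ls ++ ls')) = A.mon g (ls ++ L :: ls') := by
  induction ls with
  | nil => rfl
  | cons L' ls ih =>
    rw [List.cons_append, List.cons_append, mon_cons, mon_cons,
      hg.wick_letter_comm (Or.inl ⟨rfl, Or.inl (letter_mem_even hL)⟩), one_smul, ← mon_cons,
      ih, mon_cons]

lemma mon_eq_zero_of_sublist (hg : A.IsScalarOPE g) {L : ι × ℕ} (hL : g L.1 ∈ A.odd)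
    {ls : List (ι × ℕ)} (h : [L, L].Sublist ls) : A.mon g ls = 0 := by
  obtain ⟨t, ht⟩ := h.exists_perm_append
  obtain ⟨μ, hμ⟩ := hg.mon_perm ht
  have hodd := letter_mem_odd hL
  have hanti := hg.wick_letter_comm (Or.inr ⟨rfl, hodd, hodd⟩) (A.mon g t)
  rw [neg_one_smul, eq_neg_iff_add_eq_zero, ← two_smul ℂ, smul_eq_zero] at hanti
  rw [hμ, List.cons_append, mon_cons, List.singleton_append, mon_cons,
    hanti.resolve_left two_ne_zero, smul_zero]

end IsScalarOPE

end Monomials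

section BcBetaGamma

def stdList (ns ms ss ts : List ℕ) : List (Fin 4 × ℕ) :=
  ns.map ((0 : Fin 4), ·) ++ ms.map ((1 : Fin 4), ·) ++ ss.map ((2 : Fin 4), ·)
    ++ ts.map ((3 : Fin 4), ·)

/-- `x = :βγ²: - :bcγ: + (3/2)∂γ` for the generators `g = (b, c, β, γ)`. -/
noncomputable def xElem (A : VA V) (g : Fin 4 → V) : V :=
  A.mon g [(2, 0), (3, 0), (3, 0)] - A.mon g [(0, 0), (1, 0), (3, 0)]
    + (3 / 2 : ℂ) • A.mon g [(3, 1)]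

def βγWord (s t : ℕ) : List (Fin 4 × ℕ) := List.replicate s (2, 0) ++ List.replicate t (3, 0)

def bcβγWord (s t : ℕ) : List (Fin 4 × ℕ) := (0, 0) :: (1, 0) :: βγWord s t

variable {g : Fin 4 → V}

lemma mon_stdList (ns ms ss ts : List ℕ) :
    A.mon g (stdList ns ms ss ts) = A.stdMon (g 0) (g 1) (g 2) (g 3) ns ms ss ts := by
  simp only [mon, stdList, stdMon, List.map_append, List.map_map]
  rfl

lemma map_snd_stdList (ns ms ss ts : List ℕ) :
    (stdList ns ms ss ts).map Prod.snd = ns ++ ms ++ ss ++ ts := by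
  simp [stdList, Function.comp_def]

lemma perm_stdList {ns ns' ms ms' ss ss' ts ts' : List ℕ} (hn : ns.Perm ns') (hm : ms.Perm ms')
    (hs : ss.Perm ss') (ht : ts.Perm ts') :
    (stdList ns ms ss ts).Perm (stdList ns' ms' ss' ts') :=
  (((hn.map _).append (hm.map _)).append (hs.map _)).append (ht.map _)

lemma exists_perm_stdList (ls : List (Fin 4 × ℕ)) :
    ∃ ns ms ss ts : List ℕ, ls.Perm (stdList ns ms ss ts) := by
  induction ls with
  | nil => exact ⟨[], [], [], [], .nil⟩
  | cons L ls ih =>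
    obtain ⟨ns, ms, ss, ts, h⟩ := ih
    obtain ⟨i, n⟩ := L
    fin_cases i
    · exact ⟨n :: ns, ms, ss, ts, h.cons _⟩
    · exact ⟨ns, n :: ms, ss, ts, (h.cons _).trans (List.perm_iff_count.mpr fun _ => by
        simp [stdList, List.count_cons]; omega)⟩
    · exact ⟨ns, ms, n :: ss, ts, (h.cons _).trans (List.perm_iff_count.mpr fun _ => by
        simp [stdList, List.count_cons]; omega)⟩
    · exact ⟨ns, ms, ss, n :: ts, (h.cons _).trans (List.perm_iff_count.mpr fun _ => by
        simp [stdList, List.count_cons]; omega)⟩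

lemma exists_perm_stdList_sortedGE (ls : List (Fin 4 × ℕ)) :
    ∃ ns ms ss ts : List ℕ, ls.Perm (stdList ns ms ss ts) ∧
      ns.SortedGE ∧ ms.SortedGE ∧ ss.SortedGE ∧ ts.SortedGE := by
  obtain ⟨ns, ms, ss, ts, h⟩ := exists_perm_stdList ls
  exact ⟨_, _, _, _, h.trans (perm_stdList (ns.mergeSort_perm _).symm
    (ms.mergeSort_perm _).symm (ss.mergeSort_perm _).symm (ts.mergeSort_perm _).symm),
    List.sortedGE_mergeSort, List.sortedGE_mergeSort, List.sortedGE_mergeSort,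
    List.sortedGE_mergeSort⟩

namespace IsScalarOPE

lemma mon_mem_span_DSet (hg : A.IsScalarOPE g) (hb : g 0 ∈ A.odd) (hc : g 1 ∈ A.odd)
    {ls : List (Fin 4 × ℕ)} (hls : (ls.map Prod.snd).sum ≠ 0) :
    A.mon g ls ∈ Submodule.span ℂ (A.DSet (g 0) (g 1) (g 2) (g 3)) := by
  obtain ⟨ns, ms, ss, ts, hperm, hn, hm, hs, ht⟩ := exists_perm_stdList_sortedGE ls
  obtain ⟨μ, hμ⟩ := hg.mon_perm hperm
  rw [hμ]
  refine Submodule.smul_mem _ _ ?_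
  by_cases hnd : ns.Nodup
  swap
  · obtain ⟨a, ha⟩ : ∃ a, [a, a].Sublist ns := by
      simpa [List.nodup_iff_sublist] using hnd
    have hsub : [((0 : Fin 4), a), (0, a)].Sublist (stdList ns ms ss ts) :=
      (ha.map _).trans <| (List.sublist_append_left _ _).trans <|
        (List.sublist_append_left _ _).trans (List.sublist_append_left _ _)
    rw [hg.mon_eq_zero_of_sublist hb hsub]
    exact zero_mem _
  by_cases hmd : ms.Nodup
  swap
  · obtain ⟨a, ha⟩ : ∃ a, [a, a].Sublist ms := by
      simpa [List.nodup_iff_sublist] using hmd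
    have hsub : [((1 : Fin 4), a), (1, a)].Sublist (stdList ns ms ss ts) :=
      (ha.map _).trans <| (List.sublist_append_right _ _).trans <|
        (List.sublist_append_left _ _).trans (List.sublist_append_left _ _)
    rw [hg.mon_eq_zero_of_sublist hc hsub]
    exact zero_mem _
  obtain ⟨k, hk, hk0⟩ := List.exists_mem_ne_zero_of_sum_ne_zero
    (l := ns ++ ms ++ ss ++ ts) (by rwa [← map_snd_stdList, ← (hperm.map Prod.snd).sum_eq])
  refine Submodule.subset_span ⟨ns, ms, ss, ts, (hn.sortedGT_of_nodup hnd).isChain,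
    (hm.sortedGT_of_nodup hmd).isChain, hs.isChain, ht.isChain, ⟨k, hk, Nat.pos_of_ne_zero hk0⟩,
    mon_stdList _ _ _ _⟩

lemma monSpan_le_span_DSet (hg : A.IsScalarOPE g) (hb : g 0 ∈ A.odd) (hc : g 1 ∈ A.odd)
    {w ℓ : ℤ} (h : ℓ < w) :
    A.monSpan g w ℓ ≤ Submodule.span ℂ (A.DSet (g 0) (g 1) (g 2) (g 3)) :=
  Submodule.span_le.mpr fun _ ⟨ls, hw, hℓ, hv⟩ => hv ▸ hg.mon_mem_span_DSet hb hc (by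
    rw [deg] at hw; omega)

lemma wick_mon_sub_mon_append_mem_span (hg : A.IsScalarOPE g) (hb : g 0 ∈ A.odd)
    (hc : g 1 ∈ A.odd) (ls ls' : List (Fin 4 × ℕ)) :
    A.circ (-1) (A.mon g ls) (A.mon g ls') - A.mon g (ls ++ ls')
      ∈ Submodule.span ℂ (A.DSet (g 0) (g 1) (g 2) (g 3)) :=
  hg.monSpan_le_span_DSet hb hc (by simp only [deg, List.length_append]; omega)
    (hg.wick_mon_sub_mon_append_mem ls ls')

lemma wick_xElem_mon_sub_mem (hg : A.IsScalarOPE g) (hb : g 0 ∈ A.odd) (hc : g 1 ∈ A.odd)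
    (ls : List (Fin 4 × ℕ)) :
    A.wick (A.xElem g) (A.mon g ls)
        - (A.mon g ((2, 0) :: (3, 0) :: (3, 0) :: ls) - A.mon g ((0, 0) :: (1, 0) :: (3, 0) :: ls))
      ∈ Submodule.span ℂ (A.DSet (g 0) (g 1) (g 2) (g 3)) := by
  have hβγγ := hg.wick_mon_sub_mon_append_mem_span hb hc [(2, 0), (3, 0), (3, 0)] ls
  have hbcγ := hg.wick_mon_sub_mon_append_mem_span hb hc [(0, 0), (1, 0), (3, 0)] ls
  have hdγ := hg.wick_mon_sub_mon_append_mem_span hb hc [(3, 1)] ls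
  have hdγ' : A.mon g ([(3, 1)] ++ ls) ∈ Submodule.span ℂ (A.DSet (g 0) (g 1) (g 2) (g 3)) :=
    hg.mon_mem_span_DSet hb hc (by simp)
  convert add_mem (sub_mem hβγγ hbcγ) (Submodule.smul_mem _ (3 / 2 : ℂ) (add_mem hdγ hdγ'))
    using 1
  simp only [wick, xElem, map_add, map_sub, map_smul, LinearMap.add_apply, LinearMap.sub_apply,
    LinearMap.smul_apply, List.cons_append, List.nil_append]
  module

lemma wick_xElem_mem_span (hg : A.IsScalarOPE g) (hb : g 0 ∈ A.odd) (hc : g 1 ∈ A.odd) {v : V}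
    (hv : v ∈ Submodule.span ℂ (A.DSet (g 0) (g 1) (g 2) (g 3))) :
    A.wick (A.xElem g) v ∈ Submodule.span ℂ (A.DSet (g 0) (g 1) (g 2) (g 3)) := by
  refine Submodule.mem_comap.mp
    ((Submodule.span_le (p := Submodule.comap (A.circ (-1) (A.xElem g)) _)).mpr ?_ hv)
  rintro _ ⟨ns, ms, ss, ts, -, -, -, -, ⟨k, hk, hk0⟩, rfl⟩
  have hder : ∀ p, A.mon g (p ++ stdList ns ms ss ts)
      ∈ Submodule.span ℂ (A.DSet (g 0) (g 1) (g 2) (g 3)) := fun p =>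
    hg.mon_mem_span_DSet hb hc (by
      rw [List.map_append, List.sum_append, map_snd_stdList]
      have := List.le_sum_of_mem hk
      omega)
  have h := add_mem (hg.wick_xElem_mon_sub_mem hb hc (stdList ns ms ss ts))
    (sub_mem (hder [(2, 0), (3, 0), (3, 0)]) (hder [(0, 0), (1, 0), (3, 0)]))
  simp only [List.cons_append, List.nil_append, sub_add_cancel, mon_stdList] at h
  exact h

lemma mon_γ_cons_βγWord (hg : A.IsScalarOPE g) (hγ : g 3 ∈ A.even) (s t : ℕ) :
    A.mon g ((3, 0) :: βγWord s t) = A.mon g (βγWord s (t + 1)) :=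
  hg.mon_cons_append_of_even hγ _ _

lemma mon_γ_cons_bcβγWord (hg : A.IsScalarOPE g) (hγ : g 3 ∈ A.even) (s t : ℕ) :
    A.mon g ((3, 0) :: bcβγWord s t) = A.mon g (bcβγWord s (t + 1)) :=
  hg.mon_cons_append_of_even hγ ((0, 0) :: (1, 0) :: List.replicate s (2, 0)) _

lemma mon_β_cons_bcβγWord (hg : A.IsScalarOPE g) (hβ : g 2 ∈ A.even) (s t : ℕ) :
    A.mon g ((2, 0) :: bcβγWord s t) = A.mon g (bcβγWord (s + 1) t) :=
  hg.mon_cons_append_of_even hβ [(0, 0), (1, 0)] _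

lemma mon_βγγ_cons_βγWord (hg : A.IsScalarOPE g) (hγ : g 3 ∈ A.even) (s t : ℕ) :
    A.mon g ((2, 0) :: (3, 0) :: (3, 0) :: βγWord s t) = A.mon g (βγWord (s + 1) (t + 2)) := by
  rw [mon_cons, mon_cons, hg.mon_γ_cons_βγWord hγ, ← mon_cons, hg.mon_γ_cons_βγWord hγ]
  rfl

lemma mon_bcγ_cons_βγWord (hg : A.IsScalarOPE g) (hγ : g 3 ∈ A.even) (s t : ℕ) :
    A.mon g ((0, 0) :: (1, 0) :: (3, 0) :: βγWord s t) = A.mon g (bcβγWord s (t + 1)) := by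
  rw [mon_cons, mon_cons, hg.mon_γ_cons_βγWord hγ]
  rfl

lemma mon_βγγ_cons_bcβγWord (hg : A.IsScalarOPE g) (hβ : g 2 ∈ A.even) (hγ : g 3 ∈ A.even)
    (s t : ℕ) :
    A.mon g ((2, 0) :: (3, 0) :: (3, 0) :: bcβγWord s t)
      = A.mon g (bcβγWord (s + 1) (t + 2)) := by
  rw [mon_cons, mon_cons, hg.mon_γ_cons_bcβγWord hγ, ← mon_cons, hg.mon_γ_cons_bcβγWord hγ,
    ← mon_cons, hg.mon_β_cons_bcβγWord hβ]

lemma mon_bcγ_cons_bcβγWord (hg : A.IsScalarOPE g) (hb : g 0 ∈ A.odd) (s t : ℕ) :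
    A.mon g ((0, 0) :: (1, 0) :: (3, 0) :: bcβγWord s t) = 0 :=
  hg.mon_eq_zero_of_sublist (L := (0, 0)) hb (by simp [bcβγWord])

lemma wpow_xElem_sub_mem (hg : A.IsScalarOPE g) (hb : g 0 ∈ A.odd) (hc : g 1 ∈ A.odd)
    (hβ : g 2 ∈ A.even) (hγ : g 3 ∈ A.even) (k : ℕ) :
    A.wpow (A.xElem g) k
        - (A.mon g (βγWord k (2 * k)) - (k : ℂ) • A.mon g (bcβγWord (k - 1) (2 * k - 1)))
      ∈ Submodule.span ℂ (A.DSet (g 0) (g 1) (g 2) (g 3)) := by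
  induction k with
  | zero => simp [wpow, βγWord, mon_nil]
  | succ k ih =>
    have hβγ := hg.wick_xElem_mon_sub_mem hb hc (βγWord k (2 * k))
    rw [hg.mon_βγγ_cons_βγWord hγ, hg.mon_bcγ_cons_βγWord hγ] at hβγ
    have hbc : (k : ℂ) • (A.wick (A.xElem g) (A.mon g (bcβγWord (k - 1) (2 * k - 1)))
        - A.mon g (bcβγWord k (2 * k + 1)))
        ∈ Submodule.span ℂ (A.DSet (g 0) (g 1) (g 2) (g 3)) := by
      rcases k with _ | k
      · rw [Nat.cast_zero, zero_smul]; exact zero_mem _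
      · refine Submodule.smul_mem _ _ ?_
        have h := hg.wick_xElem_mon_sub_mem hb hc (bcβγWord k (2 * k + 1))
        rw [hg.mon_βγγ_cons_bcβγWord hβ hγ, hg.mon_bcγ_cons_bcβγWord hb, sub_zero] at h
        simpa [Nat.mul_succ] using h
    convert sub_mem (add_mem (hg.wick_xElem_mem_span hb hc ih) hβγ) hbc using 1
    simp only [wpow, wick, map_sub, map_smul, Nat.add_sub_cancel, mul_add, mul_one,
      show 2 * k + 2 - 1 = 2 * k + 1 by omega]
    push_cast
    module

end IsScalarOPE

lemma βγWord_eq_stdList (s t : ℕ) :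
    βγWord s t = stdList [] [] (List.replicate s 0) (List.replicate t 0) := by
  simp [βγWord, stdList, List.map_replicate]

lemma bcβγWord_eq_stdList (s t : ℕ) :
    bcβγWord s t = stdList [0] [0] (List.replicate s 0) (List.replicate t 0) := by
  simp [bcβγWord, βγWord, stdList, List.map_replicate]

end BcBetaGamma

end VA

theorem stmt14_general (V : Type) [AddCommGroup V] [Module ℂ V] (A : VA V)
    (b c β γ : V)
    (hb : b ∈ A.odd) (hc : c ∈ A.odd)
    (hbc0 : A.circ 0 b c = A.one) (hbc : ∀ n : ℤ, 1 ≤ n → A.circ n b c = 0)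
    (hcb0 : A.circ 0 c b = A.one) (hcb : ∀ n : ℤ, 1 ≤ n → A.circ n c b = 0)
    (hbb : ∀ n : ℤ, 0 ≤ n → A.circ n b b = 0)
    (hcc : ∀ n : ℤ, 0 ≤ n → A.circ n c c = 0)
    (hβ : β ∈ A.even) (hγ : γ ∈ A.even)
    (hβγ0 : A.circ 0 β γ = A.one) (hβγ : ∀ n : ℤ, 1 ≤ n → A.circ n β γ = 0)
    (hγβ0 : A.circ 0 γ β = -A.one) (hγβ : ∀ n : ℤ, 1 ≤ n → A.circ n γ β = 0)
    (hββ : ∀ n : ℤ, 0 ≤ n → A.circ n β β = 0)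
    (hγγ : ∀ n : ℤ, 0 ≤ n → A.circ n γ γ = 0)
    (hcross : ∀ n : ℤ, 0 ≤ n →
      A.circ n b β = 0 ∧ A.circ n b γ = 0 ∧ A.circ n c β = 0 ∧ A.circ n c γ = 0 ∧
      A.circ n β b = 0 ∧ A.circ n γ b = 0 ∧ A.circ n β c = 0 ∧ A.circ n γ c = 0)
    (x : V) (hx : x = A.wick β (A.wick γ γ) - A.wick b (A.wick c γ) + (3 / 2 : ℂ) • A.D γ)
    :
    ∀ k : ℕ, ∃ d ∈ Submodule.span ℂ (VA.DSet A b c β γ),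
      A.wpow x k
        = A.stdMon b c β γ [] [] (List.replicate k 0) (List.replicate (2 * k) 0)
          - (k : ℂ) • A.stdMon b c β γ [0] [0]
              (List.replicate (k - 1) 0) (List.replicate (2 * k - 1) 0)
          + d := by
  have hg : A.IsScalarOPE ![b, c, β, γ] := by
    refine ⟨fun i => ?_, fun i j => ?_, fun i j n hn => ?_⟩
    · fin_cases i
      exacts [Or.inr hb, Or.inr hc, Or.inl hβ, Or.inl hγ]
    · fin_cases i <;> fin_cases j <;>
        simp [hbc0, hcb0, hβγ0, hγβ0, hbb 0 le_rfl, hcc 0 le_rfl, hββ 0 le_rfl,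
          hγγ 0 le_rfl, hcross 0 le_rfl]
    · have h₁ : (1 : ℤ) ≤ n := by omega
      have h₀ : (0 : ℤ) ≤ n := by omega
      fin_cases i <;> fin_cases j <;>
        simp [hbc _ h₁, hcb _ h₁, hβγ _ h₁, hγβ _ h₁, hbb _ h₀, hcc _ h₀, hββ _ h₀,
          hγγ _ h₀, hcross _ h₀]
  have hxg : x = A.xElem ![b, c, β, γ] := by
    rw [hx, VA.xElem, VA.mon_cons, VA.mon_cons, VA.mon_singleton, VA.mon_cons, VA.mon_cons,
      VA.mon_singleton, VA.mon_singleton]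
    rfl
  intro k
  have h := hg.wpow_xElem_sub_mem hb hc hβ hγ k
  rw [VA.βγWord_eq_stdList, VA.bcβγWord_eq_stdList, VA.mon_stdList, VA.mon_stdList,
    ← hxg] at h
  exact ⟨_, h, (add_sub_cancel _ _).symm⟩

/-- For each `k ≥ 0`, the Wick power `xᵏ` of
`x = :βγ²: - :bcγ: + (3/2)∂γ` equals `:βᵏγ²ᵏ: - k :bc β^{k-1} γ^{2k-1}:` plus an element
of `𝒟`. -/
theorem stmt14 (V : Type) [AddCommGroup V] [Module ℂ V] (A : VA V)
    (b c β γ : V)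
    (hb : b ∈ A.odd) (hc : c ∈ A.odd)
    (hbc0 : A.circ 0 b c = A.one) (hbc : ∀ n : ℤ, 1 ≤ n → A.circ n b c = 0)
    (hcb0 : A.circ 0 c b = A.one) (hcb : ∀ n : ℤ, 1 ≤ n → A.circ n c b = 0)
    (hbb : ∀ n : ℤ, 0 ≤ n → A.circ n b b = 0)
    (hcc : ∀ n : ℤ, 0 ≤ n → A.circ n c c = 0)
    (hβ : β ∈ A.even) (hγ : γ ∈ A.even)
    (hβγ0 : A.circ 0 β γ = A.one) (hβγ : ∀ n : ℤ, 1 ≤ n → A.circ n β γ = 0)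
    (hγβ0 : A.circ 0 γ β = -A.one) (hγβ : ∀ n : ℤ, 1 ≤ n → A.circ n γ β = 0)
    (hββ : ∀ n : ℤ, 0 ≤ n → A.circ n β β = 0)
    (hγγ : ∀ n : ℤ, 0 ≤ n → A.circ n γ γ = 0)
    (hcross : ∀ n : ℤ, 0 ≤ n →
      A.circ n b β = 0 ∧ A.circ n b γ = 0 ∧ A.circ n c β = 0 ∧ A.circ n c γ = 0 ∧
      A.circ n β b = 0 ∧ A.circ n γ b = 0 ∧ A.circ n β c = 0 ∧ A.circ n γ c = 0)
    (LS LE LW J : V)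
    (hLS : LS = A.wick (A.D β) γ + (2 : ℂ) • A.wick β (A.D γ))
    (hLE : LE = -(A.wick (A.D b) c) - (2 : ℂ) • A.wick b (A.D c))
    (hLW : LW = LE + LS)
    (hJ : J = A.wick (LS + (1 / 2 : ℂ) • LE) c + (3 / 4 : ℂ) • A.D (A.D c))
    (x : V) (hx : x = A.wick β (A.wick γ γ) - A.wick b (A.wick c γ) + (3 / 2 : ℂ) • A.D γ)
    :
    ∀ k : ℕ, ∃ d ∈ Submodule.span ℂ (VA.DSet A b c β γ),
      A.wpow x k
        = A.stdMon b c β γ [] [] (List.replicate k 0) (List.replicate (2 * k) 0)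
          - (k : ℂ) • A.stdMon b c β γ [0] [0]
              (List.replicate (k - 1) 0) (List.replicate (2 * k - 1) 0)
          + d :=
  stmt14_general V A b c β γ hb hc hbc0 hbc hcb0 hcb hbb hcc hβ hγ hβγ0 hβγ hγβ0 hγβ hββ hγγ hcross
    x hx
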